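/- arXiv:2407.03329 — 2 statements merged into one kernel-verified Lean document; each statement's English description precedes it below -/
import Mathlib

section
/- Let σ: ℝ→ℝ be a nondecreasing sigmoidal function with σ(3)>σ(1) satisfying conditions (Σ1), (Σ2) and (Σ3) with parameter α>0, let a<b, and let 1 ≤ p < ∞. If f:[a,b]→[0,1] is continuous, then lim_{n→∞} ‖K_n^(m)(f) - f‖_p = 0, where ‖g‖_p := (∫_a^b |g(x)|^p dx)^{1/p} denotes the L^p norm on [a,b]. -/
open Filter MeasureTheory Set

noncomputable def phiK (σ : ℝ → ℝ) (x : ℝ) : ℝ := (σ (x + 1) - σ (x - 1)) / 2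

noncomputable def Kmm (σ : ℝ → ℝ) (a b : ℝ) (n : ℕ) (f : ℝ → ℝ) (x : ℝ) : ℝ :=
  sSup {y : ℝ | ∃ k : ℤ, ⌈(n : ℝ) * a⌉ ≤ k ∧ k ≤ ⌊(n : ℝ) * b⌋ - 1 ∧
    y = min ((n : ℝ) * ∫ u in ((k : ℝ) / (n : ℝ))..(((k : ℝ) + 1) / (n : ℝ)), f u)
      (phiK σ ((n : ℝ) * x - (k : ℝ)) /
        sSup {z : ℝ | ∃ d : ℤ, ⌈(n : ℝ) * a⌉ ≤ d ∧ d ≤ ⌊(n : ℝ) * b⌋ - 1 ∧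
          z = phiK σ ((n : ℝ) * x - (d : ℝ))})}

/-! ### Auxiliary definitions -/

noncomputable def Fk (f : ℝ → ℝ) (n : ℕ) (k : ℤ) : ℝ :=
  (n : ℝ) * ∫ u in ((k : ℝ) / (n : ℝ))..(((k : ℝ) + 1) / (n : ℝ)), f u

noncomputable def Dm (σ : ℝ → ℝ) (kl ku : ℤ) (n : ℕ) (x : ℝ) : ℝ :=
  sSup ((fun d : ℤ => phiK σ ((n : ℝ) * x - (d : ℝ))) '' Set.Icc kl ku)

lemma setOf_eq_image (kl ku : ℤ) (g : ℤ → ℝ) :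
    {y : ℝ | ∃ k : ℤ, kl ≤ k ∧ k ≤ ku ∧ y = g k} = g '' Set.Icc kl ku := by
  ext y
  constructor
  · rintro ⟨k, h1, h2, rfl⟩
    exact ⟨k, ⟨h1, h2⟩, rfl⟩
  · rintro ⟨k, ⟨h1, h2⟩, rfl⟩
    exact ⟨k, h1, h2, rfl⟩

lemma Kmm_eq (σ : ℝ → ℝ) (a b : ℝ) (n : ℕ) (f : ℝ → ℝ) (x : ℝ) :
    Kmm σ a b n f x = sSup ((fun k : ℤ => min (Fk f n k)
      (phiK σ ((n : ℝ) * x - (k : ℝ)) / Dm σ ⌈(n : ℝ) * a⌉ (⌊(n : ℝ) * b⌋ - 1) n x)) ''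
        Set.Icc ⌈(n : ℝ) * a⌉ (⌊(n : ℝ) * b⌋ - 1)) := by
  unfold Kmm Fk Dm
  rw [setOf_eq_image, setOf_eq_image]

/-! ### Properties of `phiK` -/

lemma concave_sum {g : ℝ → ℝ} (hg : ConcaveOn ℝ (Set.Ici (0:ℝ)) g)
    {s s' t' t : ℝ} (hs0 : 0 ≤ s) (h1 : s ≤ s') (h2 : s' ≤ t') (h3 : t' ≤ t)
    (hsum : s + t = s' + t') : g s + g t ≤ g s' + g t' := by
  rcases eq_or_lt_of_le h1 with rfl | hlt
  · have ht : t = t' := by linarith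
    rw [ht]
  · have hst : 0 < t - s := by linarith
    have hs' : s' = s + t - t' := by linarith
    subst hs'
    set lam := (t - t') / (t - s) with hlam
    set mu := (t' - s) / (t - s) with hmu
    have hl0 : 0 ≤ lam := div_nonneg (by linarith) hst.le
    have hm0 : 0 ≤ mu := div_nonneg (by linarith) hst.le
    have hlm : lam + mu = 1 := by
      rw [hlam, hmu, ← add_div, show t - t' + (t' - s) = t - s by ring,
        div_self (ne_of_gt hst)]
    have hsmem : s ∈ Set.Ici (0:ℝ) := hs0
    have htmem : t ∈ Set.Ici (0:ℝ) := by
      show (0:ℝ) ≤ t; linarith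
    have i1 := hg.2 hsmem htmem hl0 hm0 hlm
    have i2 := hg.2 hsmem htmem hm0 hl0 (by linarith)
    have e1 : lam • s + mu • t = t' := by
      simp only [smul_eq_mul, hlam, hmu]
      field_simp
      ring
    have e2 : mu • s + lam • t = s + t - t' := by
      simp only [smul_eq_mul, hlam, hmu]
      field_simp
      ring
    rw [e1] at i1
    rw [e2] at i2
    simp only [smul_eq_mul] at i1 i2
    have hkey : g s + g t = (lam * g s + mu * g t) + (mu * g s + lam * g t) := by
      linear_combination (-(g s + g t)) * hlm
    linarith

lemma sigma_neg {σ : ℝ → ℝ} (hS1 : ∀ x : ℝ, σ (-x) - 1 / 2 = -(σ x - 1 / 2)) :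
    ∀ x : ℝ, σ (-x) = 1 - σ x := by
  intro x; have := hS1 x; linarith

lemma phi_nonneg {σ : ℝ → ℝ} (hmono : Monotone σ) (x : ℝ) : 0 ≤ phiK σ x := by
  have := hmono (show x - 1 ≤ x + 1 by linarith)
  unfold phiK; linarith

lemma phi_even {σ : ℝ → ℝ} (hS1 : ∀ x : ℝ, σ (-x) = 1 - σ x) (x : ℝ) :
    phiK σ (-x) = phiK σ x := by
  unfold phiK
  rw [show -x + 1 = -(x - 1) by ring, show -x - 1 = -(x + 1) by ring, hS1, hS1]
  ring

lemma phi_abs {σ : ℝ → ℝ} (hS1 : ∀ x : ℝ, σ (-x) = 1 - σ x) (x : ℝ) :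
    phiK σ x = phiK σ |x| := by
  rcases abs_cases x with ⟨h, _⟩ | ⟨h, _⟩
  · rw [h]
  · rw [h, phi_even hS1]

lemma phi_anti {σ : ℝ → ℝ} (hS1 : ∀ x : ℝ, σ (-x) = 1 - σ x)
    (hcc : ConcaveOn ℝ (Set.Ici (0:ℝ)) σ) :
    ∀ x y : ℝ, 0 ≤ x → x ≤ y → phiK σ y ≤ phiK σ x := by
  have case1 : ∀ x y : ℝ, 1 ≤ x → x ≤ y → phiK σ y ≤ phiK σ x := by
    intro x y hx hxy
    unfold phiK
    rcases le_total (x + 1) (y - 1) with h | h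
    · have := concave_sum hcc (s := x - 1) (s' := x + 1) (t' := y - 1) (t := y + 1)
        (by linarith) (by linarith) h (by linarith) (by ring)
      linarith
    · have := concave_sum hcc (s := x - 1) (s' := y - 1) (t' := x + 1) (t := y + 1)
        (by linarith) (by linarith) h (by linarith) (by ring)
      linarith
  have case2 : ∀ x y : ℝ, 0 ≤ x → x ≤ y → y ≤ 1 → phiK σ y ≤ phiK σ x := by
    intro x y hx hxy hy1
    have e1 : σ (x - 1) = 1 - σ (1 - x) := by
      have := hS1 (1 - x); rw [show -(1 - x) = x - 1 by ring] at this; linarith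
    have e2 : σ (y - 1) = 1 - σ (1 - y) := by
      have := hS1 (1 - y); rw [show -(1 - y) = y - 1 by ring] at this; linarith
    unfold phiK
    rw [e1, e2]
    have := concave_sum hcc (s := 1 - y) (s' := 1 - x) (t' := x + 1) (t := y + 1)
      (by linarith) (by linarith) (by linarith) (by linarith) (by ring)
    linarith
  intro x y hx hxy
  rcases le_total y 1 with h | h
  · exact case2 x y hx hxy h
  · rcases le_total 1 x with h' | h'
    · exact case1 x y h' hxy
    · calc phiK σ y ≤ phiK σ 1 := case1 1 y le_rfl h
        _ ≤ phiK σ x := case2 x 1 hx h' le_rfl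

lemma phi_two_pos {σ : ℝ → ℝ} (h31 : σ 1 < σ 3) : 0 < phiK σ 2 := by
  unfold phiK; norm_num; linarith

lemma phi_tendsto {σ : ℝ → ℝ} (hsig2 : Filter.Tendsto σ Filter.atTop (nhds 1)) :
    Filter.Tendsto (phiK σ) Filter.atTop (nhds 0) := by
  have h1 : Filter.Tendsto (fun x : ℝ => σ (x + 1)) Filter.atTop (nhds 1) :=
    hsig2.comp (tendsto_atTop_add_const_right _ 1 tendsto_id)
  have h2 : Filter.Tendsto (fun x : ℝ => σ (x - 1)) Filter.atTop (nhds 1) :=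
    hsig2.comp (tendsto_atTop_add_const_right _ (-1) tendsto_id)
  have := (h1.sub h2).div_const 2
  norm_num at this
  convert this using 1
  rfl

/-! ### Bounds on `Fk` -/

lemma interval_sub {a b : ℝ} {n : ℕ} (hN : (0:ℝ) < n) {k : ℤ} (hka : (n : ℝ) * a ≤ k)
    (hkb : (k : ℝ) + 1 ≤ (n : ℝ) * b) :
    Set.Icc ((k : ℝ) / (n : ℝ)) (((k : ℝ) + 1) / (n : ℝ)) ⊆ Set.Icc a b := by
  apply Set.Icc_subset_Icc
  · rw [le_div_iff₀ hN]
    nlinarith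
  · rw [div_le_iff₀ hN]
    nlinarith

lemma Fk_le {a b : ℝ} {f : ℝ → ℝ} {n : ℕ} (hN : (0:ℝ) < n)
    (hfc : ContinuousOn f (Set.Icc a b))
    {k : ℤ} (hka : (n : ℝ) * a ≤ k) (hkb : (k : ℝ) + 1 ≤ (n : ℝ) * b)
    {c : ℝ} (hc : ∀ u ∈ Set.Icc ((k : ℝ) / (n : ℝ)) (((k : ℝ) + 1) / (n : ℝ)), f u ≤ c) :
    Fk f n k ≤ c := by
  have hle : (k : ℝ) / (n : ℝ) ≤ ((k : ℝ) + 1) / (n : ℝ) := by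
    rw [div_le_div_iff₀ hN hN]; nlinarith
  have hint : IntervalIntegrable f volume ((k : ℝ) / (n : ℝ)) (((k : ℝ) + 1) / (n : ℝ)) := by
    apply ContinuousOn.intervalIntegrable
    rw [Set.uIcc_of_le hle]
    exact hfc.mono (interval_sub hN hka hkb)
  have h1 : (∫ u in ((k : ℝ) / (n : ℝ))..(((k : ℝ) + 1) / (n : ℝ)), f u) ≤
      ∫ _ in ((k : ℝ) / (n : ℝ))..(((k : ℝ) + 1) / (n : ℝ)), c :=
    intervalIntegral.integral_mono_on hle hint intervalIntegrable_const hc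
  rw [intervalIntegral.integral_const, smul_eq_mul] at h1
  have h2 : (((k : ℝ) + 1) / (n : ℝ) - (k : ℝ) / (n : ℝ)) = 1 / (n : ℝ) := by
    field_simp
    ring
  rw [h2] at h1
  unfold Fk
  calc (n : ℝ) * ∫ u in ((k : ℝ) / (n : ℝ))..(((k : ℝ) + 1) / (n : ℝ)), f u
      ≤ (n : ℝ) * (1 / (n : ℝ) * c) := mul_le_mul_of_nonneg_left h1 hN.le
    _ = c := by field_simp

lemma Fk_ge {a b : ℝ} {f : ℝ → ℝ} {n : ℕ} (hN : (0:ℝ) < n)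
    (hfc : ContinuousOn f (Set.Icc a b))
    {k : ℤ} (hka : (n : ℝ) * a ≤ k) (hkb : (k : ℝ) + 1 ≤ (n : ℝ) * b)
    {c : ℝ} (hc : ∀ u ∈ Set.Icc ((k : ℝ) / (n : ℝ)) (((k : ℝ) + 1) / (n : ℝ)), c ≤ f u) :
    c ≤ Fk f n k := by
  have hle : (k : ℝ) / (n : ℝ) ≤ ((k : ℝ) + 1) / (n : ℝ) := by
    rw [div_le_div_iff₀ hN hN]; nlinarith
  have hint : IntervalIntegrable f volume ((k : ℝ) / (n : ℝ)) (((k : ℝ) + 1) / (n : ℝ)) := by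
    apply ContinuousOn.intervalIntegrable
    rw [Set.uIcc_of_le hle]
    exact hfc.mono (interval_sub hN hka hkb)
  have h1 : (∫ _ in ((k : ℝ) / (n : ℝ))..(((k : ℝ) + 1) / (n : ℝ)), c) ≤
      ∫ u in ((k : ℝ) / (n : ℝ))..(((k : ℝ) + 1) / (n : ℝ)), f u :=
    intervalIntegral.integral_mono_on hle intervalIntegrable_const hint hc
  rw [intervalIntegral.integral_const, smul_eq_mul] at h1
  have h2 : (((k : ℝ) + 1) / (n : ℝ) - (k : ℝ) / (n : ℝ)) = 1 / (n : ℝ) := by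
    field_simp
    ring
  rw [h2] at h1
  unfold Fk
  calc c = (n : ℝ) * (1 / (n : ℝ) * c) := by field_simp
    _ ≤ (n : ℝ) * ∫ u in ((k : ℝ) / (n : ℝ))..(((k : ℝ) + 1) / (n : ℝ)), f u :=
        mul_le_mul_of_nonneg_left h1 hN.le

lemma near_k_exists {a b x : ℝ} {n : ℕ} (hN : (0:ℝ) < n) (hx : x ∈ Set.Icc a b)
    (hkl : ⌈(n : ℝ) * a⌉ ≤ ⌊(n : ℝ) * b⌋ - 1) :
    ∃ k₀ : ℤ, k₀ ∈ Set.Icc ⌈(n : ℝ) * a⌉ (⌊(n : ℝ) * b⌋ - 1) ∧ |(n : ℝ) * x - k₀| ≤ 2 := by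
  set kl : ℤ := ⌈(n : ℝ) * a⌉ with hkldef
  set ku : ℤ := ⌊(n : ℝ) * b⌋ - 1 with hkudef
  have hxa : (n : ℝ) * a ≤ (n : ℝ) * x := mul_le_mul_of_nonneg_left hx.1 hN.le
  have hxb : (n : ℝ) * x ≤ (n : ℝ) * b := mul_le_mul_of_nonneg_left hx.2 hN.le
  have hklR : (n : ℝ) * a ≤ (kl : ℝ) := Int.le_ceil _
  have hklR' : (kl : ℝ) < (n : ℝ) * a + 1 := Int.ceil_lt_add_one _
  have hkuR : (ku : ℝ) ≤ (n : ℝ) * b - 1 := by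
    have := Int.floor_le ((n : ℝ) * b)
    rw [hkudef]; push_cast; linarith
  have hkuR' : (n : ℝ) * b - 2 < (ku : ℝ) := by
    have := Int.lt_floor_add_one ((n : ℝ) * b)
    rw [hkudef]; push_cast; linarith
  have hm1 : ((⌊(n : ℝ) * x⌋ : ℤ) : ℝ) ≤ (n : ℝ) * x := Int.floor_le _
  have hm2 : (n : ℝ) * x < ((⌊(n : ℝ) * x⌋ : ℤ) : ℝ) + 1 := Int.lt_floor_add_one _
  rcases lt_or_ge ⌊(n : ℝ) * x⌋ kl with h | h
  · refine ⟨kl, ⟨le_refl _, hkl⟩, ?_⟩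
    have hklm : ((⌊(n : ℝ) * x⌋ : ℤ) : ℝ) + 1 ≤ (kl : ℝ) := by exact_mod_cast h
    rw [abs_le]
    constructor <;> linarith
  · rcases le_or_gt ⌊(n : ℝ) * x⌋ ku with h2 | h2
    · refine ⟨⌊(n : ℝ) * x⌋, ⟨h, h2⟩, ?_⟩
      rw [abs_le]
      constructor <;> linarith
    · refine ⟨ku, ⟨hkl, le_refl _⟩, ?_⟩
      have hkum : (ku : ℝ) + 1 ≤ ((⌊(n : ℝ) * x⌋ : ℤ) : ℝ) := by exact_mod_cast h2
      rw [abs_le]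
      constructor <;> linarith

/-! ### The pointwise estimate -/

lemma keyEst (σ : ℝ → ℝ) {a b : ℝ} (f : ℝ → ℝ)
    (hmono : Monotone σ) (h31 : σ 1 < σ 3)
    (hS1 : ∀ x : ℝ, σ (-x) = 1 - σ x)
    (hcc : ConcaveOn ℝ (Set.Ici (0 : ℝ)) σ)
    (hfc : ContinuousOn f (Set.Icc a b))
    (hf01 : ∀ x ∈ Set.Icc a b, f x ∈ Set.Icc (0 : ℝ) 1)
    {ε δ : ℝ} (hε : 0 < ε) (hδ : 0 < δ)
    (hUC : ∀ u ∈ Set.Icc a b, ∀ v ∈ Set.Icc a b, |u - v| < δ → |f u - f v| ≤ ε)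
    {n : ℕ} (hn1 : 1 ≤ (n : ℝ))
    (hkl : ⌈(n : ℝ) * a⌉ ≤ ⌊(n : ℝ) * b⌋ - 1)
    (hn4 : 4 ≤ (n : ℝ) * δ)
    (hp2 : phiK σ ((n : ℝ) * δ / 2) < phiK σ 2)
    (hpe : phiK σ ((n : ℝ) * δ / 2) ≤ ε * phiK σ 2)
    {x : ℝ} (hx : x ∈ Set.Icc a b) :
    |Kmm σ a b n f x - f x| ≤ ε := by
  have hN : (0:ℝ) < (n : ℝ) := lt_of_lt_of_le one_pos hn1
  have h2pos : 0 < phiK σ 2 := phi_two_pos h31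
  set kl : ℤ := ⌈(n : ℝ) * a⌉ with hkldef
  set ku : ℤ := ⌊(n : ℝ) * b⌋ - 1 with hkudef
  have hklR : (n : ℝ) * a ≤ (kl : ℝ) := Int.le_ceil _
  have hkuR : (ku : ℝ) ≤ (n : ℝ) * b - 1 := by
    have := Int.floor_le ((n : ℝ) * b)
    rw [hkudef]; push_cast; linarith
  -- bounds used for Fk lemmas
  have hbnd : ∀ k : ℤ, k ∈ Set.Icc kl ku → (n : ℝ) * a ≤ (k : ℝ) ∧ (k : ℝ) + 1 ≤ (n : ℝ) * b := by
    intro k hk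
    have h1 : (kl : ℝ) ≤ (k : ℝ) := by exact_mod_cast hk.1
    have h2 : (k : ℝ) ≤ (ku : ℝ) := by exact_mod_cast hk.2
    exact ⟨le_trans hklR h1, by linarith⟩
  have hF01 : ∀ k ∈ Set.Icc kl ku, 0 ≤ Fk f n k ∧ Fk f n k ≤ 1 := by
    intro k hk
    obtain ⟨h1, h2⟩ := hbnd k hk
    constructor
    · exact Fk_ge hN hfc h1 h2 (fun u hu => (hf01 u (interval_sub hN h1 h2 hu)).1)
    · exact Fk_le hN hfc h1 h2 (fun u hu => (hf01 u (interval_sub hN h1 h2 hu)).2)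
  -- near estimate
  have hnear : ∀ k ∈ Set.Icc kl ku, |(n : ℝ) * x - k| ≤ (n : ℝ) * δ / 2 →
      |Fk f n k - f x| ≤ ε := by
    intro k hk hkn
    obtain ⟨hb1, hb2⟩ := hbnd k hk
    rw [abs_le] at hkn
    have hu : ∀ u ∈ Set.Icc ((k : ℝ) / (n : ℝ)) (((k : ℝ) + 1) / (n : ℝ)), |f u - f x| ≤ ε := by
      intro u hu
      apply hUC u (interval_sub hN hb1 hb2 hu) x hx
      have h1 : x - δ / 2 ≤ (k : ℝ) / (n : ℝ) := by
        rw [le_div_iff₀ hN]; nlinarith [hkn.2]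
      have h2 : ((k : ℝ) + 1) / (n : ℝ) ≤ x + δ / 2 + δ / 4 := by
        rw [div_le_iff₀ hN]; nlinarith [hkn.1, hn4]
      rw [abs_lt]
      constructor
      · have := hu.1; linarith
      · have := hu.2; linarith
    rw [abs_le]
    constructor
    · have := Fk_ge hN hfc hb1 hb2 (c := f x - ε)
        (fun u hu' => by have h := hu u hu'; rw [abs_le] at h; linarith)
      linarith
    · have := Fk_le hN hfc hb1 hb2 (c := f x + ε)
        (fun u hu' => by have h := hu u hu'; rw [abs_le] at h; linarith)
      linarith
  -- D bounds
  obtain ⟨k₀, hk₀mem, hk₀d⟩ := near_k_exists hN hx hkl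
  have hIccne : (Set.Icc kl ku).Nonempty := Set.nonempty_Icc.2 hkl
  have hZfin : ((fun d : ℤ => phiK σ ((n : ℝ) * x - (d : ℝ))) '' Set.Icc kl ku).Finite :=
    (Set.finite_Icc kl ku).image _
  have hZne : ((fun d : ℤ => phiK σ ((n : ℝ) * x - (d : ℝ))) '' Set.Icc kl ku).Nonempty :=
    hIccne.image _
  have hDge : ∀ d ∈ Set.Icc kl ku, phiK σ ((n : ℝ) * x - (d : ℝ)) ≤ Dm σ kl ku n x :=
    fun d hd => le_csSup hZfin.bddAbove (Set.mem_image_of_mem _ hd)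
  have hgk0 : phiK σ 2 ≤ phiK σ ((n : ℝ) * x - (k₀ : ℝ)) := by
    rw [phi_abs hS1 ((n : ℝ) * x - (k₀ : ℝ))]
    exact phi_anti hS1 hcc _ _ (abs_nonneg _) hk₀d
  have hD2 : phiK σ 2 ≤ Dm σ kl ku n x := le_trans hgk0 (hDge k₀ hk₀mem)
  have hDpos : 0 < Dm σ kl ku n x := lt_of_lt_of_le h2pos hD2
  have hfar : ∀ k : ℤ, (n : ℝ) * δ / 2 ≤ |(n : ℝ) * x - k| →
      phiK σ ((n : ℝ) * x - (k : ℝ)) ≤ phiK σ ((n : ℝ) * δ / 2) := by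
    intro k hk
    rw [phi_abs hS1]
    exact phi_anti hS1 hcc _ _ (by nlinarith) hk
  -- Y
  have hYfin : ((fun k : ℤ => min (Fk f n k)
      (phiK σ ((n : ℝ) * x - (k : ℝ)) / Dm σ kl ku n x)) '' Set.Icc kl ku).Finite :=
    (Set.finite_Icc kl ku).image _
  have hfx0 : 0 ≤ f x := (hf01 x hx).1
  -- upper bound
  have hub : Kmm σ a b n f x ≤ f x + ε := by
    rw [Kmm_eq]
    apply csSup_le (hIccne.image _)
    rintro y ⟨k, hk, rfl⟩
    rcases le_or_gt |(n : ℝ) * x - k| ((n : ℝ) * δ / 2) with hnr | hfr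
    · have h := hnear k hk hnr
      rw [abs_le] at h
      exact le_trans (min_le_left _ _) (by linarith [h.2])
    · apply le_trans (min_le_right _ _)
      have h1 : phiK σ ((n : ℝ) * x - (k : ℝ)) / Dm σ kl ku n x ≤
          phiK σ ((n : ℝ) * δ / 2) / phiK σ 2 :=
        div_le_div₀ (phi_nonneg hmono _) (hfar k hfr.le) h2pos hD2
      have h2 : phiK σ ((n : ℝ) * δ / 2) / phiK σ 2 ≤ ε := by
        rw [div_le_iff₀ h2pos]; linarith
      linarith
  -- lower bound
  have hlb : f x - ε ≤ Kmm σ a b n f x := by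
    have hmem : Dm σ kl ku n x ∈
        ((fun d : ℤ => phiK σ ((n : ℝ) * x - (d : ℝ))) '' Set.Icc kl ku) :=
      hZne.csSup_mem hZfin
    obtain ⟨d₀, hd₀mem, hd₀⟩ := hmem
    simp only at hd₀
    have hd₀near : |(n : ℝ) * x - d₀| ≤ (n : ℝ) * δ / 2 := by
      by_contra hcon
      push_neg at hcon
      have h := hfar d₀ hcon.le
      rw [hd₀] at h
      linarith
    rw [Kmm_eq]
    have hmem2 : min (Fk f n d₀) (phiK σ ((n : ℝ) * x - (d₀ : ℝ)) / Dm σ kl ku n x) ∈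
        ((fun k : ℤ => min (Fk f n k)
          (phiK σ ((n : ℝ) * x - (k : ℝ)) / Dm σ kl ku n x)) '' Set.Icc kl ku) :=
      Set.mem_image_of_mem _ hd₀mem
    have hge := le_csSup hYfin.bddAbove hmem2
    have h1 : phiK σ ((n : ℝ) * x - (d₀ : ℝ)) / Dm σ kl ku n x = 1 := by
      rw [hd₀]; exact div_self hDpos.ne'
    rw [h1, min_eq_left (hF01 d₀ hd₀mem).2] at hge
    have hFd := hnear d₀ hd₀mem hd₀near
    rw [abs_le] at hFd
    linarith [hFd.1]
  rw [abs_le]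
  constructor <;> linarith
theorem stmt13 (σ : ℝ → ℝ) (α : ℝ) (a b : ℝ) (hab : a < b) (p : ℝ) (hp : 1 ≤ p)
    (f : ℝ → ℝ)
    (hsig1 : Filter.Tendsto σ Filter.atBot (nhds 0))
    (hsig2 : Filter.Tendsto σ Filter.atTop (nhds 1))
    (hmono : Monotone σ) (h31 : σ 1 < σ 3)
    (hS1 : ∀ x : ℝ, σ (-x) - 1 / 2 = -(σ x - 1 / 2))
    (hS2 : ContDiff ℝ 2 σ ∧ ConcaveOn ℝ (Set.Ici (0 : ℝ)) σ)
    (hα : 0 < α)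
    (hS3 : ∃ M > (0 : ℝ), ∃ L > (0 : ℝ), ∀ x : ℝ, x ≤ -L → σ x ≤ M * |x| ^ (-(1 + α)))
    (hfc : ContinuousOn f (Set.Icc a b))
    (hf01 : ∀ x ∈ Set.Icc a b, f x ∈ Set.Icc (0 : ℝ) 1) :
    Filter.Tendsto
      (fun n : ℕ => (∫ x in a..b, |Kmm σ a b n f x - f x| ^ p) ^ (1 / p))
      Filter.atTop (nhds 0) := by
  have hS1' : ∀ x : ℝ, σ (-x) = 1 - σ x := sigma_neg hS1
  have hcc : ConcaveOn ℝ (Set.Ici (0 : ℝ)) σ := hS2.2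
  have h2pos : 0 < phiK σ 2 := phi_two_pos h31
  have hp0 : 0 < p := lt_of_lt_of_le one_pos hp
  have hba : 0 < b - a := by linarith
  have hucon := (isCompact_Icc : IsCompact (Set.Icc a b)).uniformContinuousOn_of_continuous hfc
  rw [Metric.uniformContinuousOn_iff] at hucon
  rw [Metric.tendsto_nhds]
  intro ep hep
  set B : ℝ := (b - a) ^ (1 / p) with hBdef
  have hB0 : 0 ≤ B := Real.rpow_nonneg hba.le _
  set ε : ℝ := ep / (2 * (B + 1)) with hεdef
  have hεpos : 0 < ε := div_pos hep (by linarith)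
  obtain ⟨δ, hδ, hδprop⟩ := hucon ε hεpos
  have hUC : ∀ u ∈ Set.Icc a b, ∀ v ∈ Set.Icc a b, |u - v| < δ → |f u - f v| ≤ ε := by
    intro u hu v hv h
    have := hδprop u hu v hv (by rwa [Real.dist_eq])
    rw [Real.dist_eq] at this
    exact this.le
  -- eventual conditions
  have e1 : ∀ᶠ n : ℕ in Filter.atTop, 1 ≤ (n : ℝ) :=
    (tendsto_natCast_atTop_atTop (R := ℝ)).eventually_ge_atTop 1
  have e2 : ∀ᶠ n : ℕ in Filter.atTop, ⌈(n : ℝ) * a⌉ ≤ ⌊(n : ℝ) * b⌋ - 1 := by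
    filter_upwards [(tendsto_natCast_atTop_atTop (R := ℝ)).eventually_ge_atTop (3 / (b - a))]
      with n hn
    have h3 : 3 ≤ (n : ℝ) * (b - a) := (div_le_iff₀ hba).1 hn
    have hc1 : ((⌈(n : ℝ) * a⌉ : ℤ) : ℝ) < (n : ℝ) * a + 1 := Int.ceil_lt_add_one _
    have hc2 : (n : ℝ) * b - 1 < ((⌊(n : ℝ) * b⌋ : ℤ) : ℝ) := by
      linarith [Int.lt_floor_add_one ((n : ℝ) * b)]
    have hnb : (n : ℝ) * a + 3 ≤ (n : ℝ) * b := by nlinarith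
    have hlt : ((⌈(n : ℝ) * a⌉ : ℤ) : ℝ) < ((⌊(n : ℝ) * b⌋ : ℤ) : ℝ) := by linarith
    have hZ : ⌈(n : ℝ) * a⌉ < ⌊(n : ℝ) * b⌋ := by exact_mod_cast hlt
    omega
  have e3 : ∀ᶠ n : ℕ in Filter.atTop, 4 ≤ (n : ℝ) * δ := by
    filter_upwards [(tendsto_natCast_atTop_atTop (R := ℝ)).eventually_ge_atTop (4 / δ)]
      with n hn
    exact (div_le_iff₀ hδ).1 hn
  have e4 : ∀ᶠ n : ℕ in Filter.atTop,
      phiK σ ((n : ℝ) * δ / 2) < phiK σ 2 ∧ phiK σ ((n : ℝ) * δ / 2) ≤ ε * phiK σ 2 := by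
    have ht2 : Filter.Tendsto (fun n : ℕ => (n : ℝ) * δ / 2) Filter.atTop Filter.atTop :=
      ((tendsto_natCast_atTop_atTop (R := ℝ)).atTop_mul_const hδ).atTop_div_const two_pos
    have ht : Filter.Tendsto (fun n : ℕ => phiK σ ((n : ℝ) * δ / 2)) Filter.atTop (nhds 0) :=
      (phi_tendsto hsig2).comp ht2
    have hcpos : 0 < min (phiK σ 2) (ε * phiK σ 2) := lt_min h2pos (mul_pos hεpos h2pos)
    filter_upwards [ht.eventually (gt_mem_nhds hcpos)] with n hn
    exact ⟨lt_of_lt_of_le hn (min_le_left _ _), le_trans hn.le (min_le_right _ _)⟩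
  filter_upwards [e1, e2, e3, e4] with n h1 h2 h3 h4
  -- pointwise estimate
  have hpt : ∀ y ∈ Set.Icc a b, |Kmm σ a b n f y - f y| ≤ ε := fun y hy =>
    keyEst σ f hmono h31 hS1' hcc hfc hf01 hεpos hδ hUC h1 h2 h3 h4.1 h4.2 hy
  have hintle : (∫ x in a..b, |Kmm σ a b n f x - f x| ^ p) ≤ ε ^ p * (b - a) := by
    have hb1 := intervalIntegral.norm_integral_le_of_norm_le_const (a := a) (b := b)
      (C := ε ^ p) (f := fun x => |Kmm σ a b n f x - f x| ^ p) ?_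
    · rw [abs_of_nonneg (by linarith : (0:ℝ) ≤ b - a), Real.norm_eq_abs] at hb1
      exact le_trans (le_abs_self _) hb1
    · intro y hy
      have hy' : y ∈ Set.Icc a b :=
        Set.Ioc_subset_Icc_self (by rwa [Set.uIoc_of_le hab.le] at hy)
      rw [Real.norm_eq_abs, abs_of_nonneg (Real.rpow_nonneg (abs_nonneg _) _)]
      exact Real.rpow_le_rpow (abs_nonneg _) (hpt y hy') hp0.le
  have hint0 : 0 ≤ ∫ x in a..b, |Kmm σ a b n f x - f x| ^ p :=
    intervalIntegral.integral_nonneg hab.le (fun u _ => Real.rpow_nonneg (abs_nonneg _) _)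
  have hq : (∫ x in a..b, |Kmm σ a b n f x - f x| ^ p) ^ (1 / p) ≤ ε * B := by
    calc (∫ x in a..b, |Kmm σ a b n f x - f x| ^ p) ^ (1 / p)
        ≤ (ε ^ p * (b - a)) ^ (1 / p) :=
          Real.rpow_le_rpow hint0 hintle (by positivity)
      _ = ε * B := by
          rw [Real.mul_rpow (by positivity) hba.le, ← Real.rpow_mul hεpos.le,
            mul_one_div, div_self hp0.ne', Real.rpow_one]
  rw [Real.dist_eq, sub_zero, abs_of_nonneg (Real.rpow_nonneg hint0 _)]
  have hfin : ε * B < ep := by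
    have hne : (2 * (B + 1)) ≠ 0 := by positivity
    have hprod : ε * (2 * (B + 1)) = ep := by
      rw [hεdef]; field_simp
    nlinarith
  exact lt_of_le_of_lt hq hfin
end

section
/- Let σ: ℝ→ℝ be a nondecreasing sigmoidal function with σ(3)>σ(1) satisfying conditions (Σ1), (Σ2) and (Σ3) with parameter α>0, let a<b, and let β∈(0,1]. Suppose f:[a,b]→[0,1] is Hölder continuous of order β, i.e. there exists K>0 such that |f(x)-f(y)| ≤ K·|x-y|^β for all x,y∈[a,b]. Then there exist C>0 and N∈ℕ such that for all n ≥ N, sup_{x∈[a,b]} |K_n^(m)(f;x) - f(x)| ≤ C·n^{-(1+α)β/(1+α+β)}. -/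
open Filter MeasureTheory Set

section Aux
variable {σ : ℝ → ℝ}

lemma sigma_sym (hS1 : ∀ x : ℝ, σ (-x) - 1 / 2 = -(σ x - 1 / 2)) (x : ℝ) :
    σ (-x) = 1 - σ x := by have := hS1 x; linarith

lemma sigma_le_one (hmono : Monotone σ) (hsig2 : Tendsto σ atTop (nhds 1)) (x : ℝ) :
    σ x ≤ 1 :=
  ge_of_tendsto hsig2 ((eventually_ge_atTop x).mono fun y hy => hmono hy)

lemma sigma_nonneg (hmono : Monotone σ) (hsig1 : Tendsto σ atBot (nhds 0)) (x : ℝ) :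
    0 ≤ σ x :=
  le_of_tendsto hsig1 ((eventually_le_atBot x).mono fun y hy => hmono hy)

lemma phiK_nonneg (hmono : Monotone σ) (x : ℝ) : 0 ≤ phiK σ x := by
  have : σ (x - 1) ≤ σ (x + 1) := hmono (by linarith)
  simp only [phiK]; linarith

lemma phiK_even (hS1 : ∀ x : ℝ, σ (-x) - 1 / 2 = -(σ x - 1 / 2)) (x : ℝ) :
    phiK σ (-x) = phiK σ x := by
  simp only [phiK]
  have h1 : σ (-x + 1) = 1 - σ (x - 1) := by
    have := sigma_sym hS1 (x - 1); rw [show -(x-1) = -x + 1 by ring] at this; linarith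
  have h2 : σ (-x - 1) = 1 - σ (x + 1) := by
    have := sigma_sym hS1 (x + 1); rw [show -(x+1) = -x - 1 by ring] at this; linarith
  rw [h1, h2]; ring

/-- Concave increment lemma: increments over right-shifted intervals are smaller. -/
lemma concave_inc (hc : ConcaveOn ℝ (Set.Ici (0:ℝ)) σ) {x y h : ℝ}
    (hx : 0 ≤ x) (hxy : x ≤ y) (hh : 0 ≤ h) :
    σ (y + h) - σ y ≤ σ (x + h) - σ x := by
  rcases eq_or_lt_of_le (show x ≤ y + h by linarith) with heq | hlt
  · have hy : y = x := le_antisymm (by linarith) hxy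
    have hh0 : h = 0 := by linarith
    rw [hy, hh0]
  · set d := y + h - x with hd
    have hdpos : 0 < d := by simp only [hd]; linarith
    have hmem1 : x ∈ Set.Ici (0:ℝ) := hx
    have hmem2 : y + h ∈ Set.Ici (0:ℝ) := by simp; linarith
    have hsum : h/d + (y-x)/d = 1 := by
      rw [← add_div, hd]; field_simp; ring
    have hyx : (0:ℝ) ≤ (y-x)/d := div_nonneg (by linarith) hdpos.le
    have hhd : (0:ℝ) ≤ h/d := div_nonneg hh hdpos.le
    have e1 := hc.2 hmem1 hmem2 hhd hyx hsum
    have e2 := hc.2 hmem1 hmem2 hyx hhd (by linarith [hsum])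
    have c1 : (h/d) • x + ((y-x)/d) • (y + h) = y := by
      simp only [smul_eq_mul]; field_simp; ring
    have c2 : ((y-x)/d) • x + (h/d) • (y + h) = x + h := by
      simp only [smul_eq_mul]; field_simp; ring
    rw [c1] at e1; rw [c2] at e2
    simp only [smul_eq_mul] at e1 e2
    have l1 : h/d * σ x + (y-x)/d * σ x = σ x := by rw [← add_mul, hsum, one_mul]
    have l2 : h/d * σ (y+h) + (y-x)/d * σ (y+h) = σ (y+h) := by
      rw [← add_mul, hsum, one_mul]
    linarith

lemma phiK_anti (hS1 : ∀ x : ℝ, σ (-x) - 1 / 2 = -(σ x - 1 / 2))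
    (hc : ConcaveOn ℝ (Set.Ici (0:ℝ)) σ) {s t : ℝ} (hs : 0 ≤ s) (hst : s ≤ t) :
    phiK σ t ≤ phiK σ s := by
  -- key inequality: σ(t+1) - σ(s+1) ≤ σ(t-1) - σ(s-1) for 0 ≤ s ≤ t
  suffices hkey : ∀ s t : ℝ, 0 ≤ s → s ≤ t → σ (t+1) - σ (s+1) ≤ σ (t-1) - σ (s-1) by
    have := hkey s t hs hst
    simp only [phiK]; linarith
  clear hs hst s t
  have main : ∀ s t : ℝ, 0 ≤ s → s ≤ t → (1 ≤ s ∨ t ≤ 1) →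
      σ (t+1) - σ (s+1) ≤ σ (t-1) - σ (s-1) := by
    intro s t hs hst hcase
    rcases hcase with h1 | h1
    · have := concave_inc hc (x := s - 1) (y := s + 1) (h := t - s)
        (by linarith) (by linarith) (by linarith)
      rw [show s + 1 + (t - s) = t + 1 by ring, show s - 1 + (t - s) = t - 1 by ring] at this
      linarith
    · have := concave_inc hc (x := 1 - t) (y := s + 1) (h := t - s)
        (by linarith) (by linarith) (by linarith)
      rw [show s + 1 + (t - s) = t + 1 by ring, show 1 - t + (t - s) = 1 - s by ring] at this
      have e1 : σ (1 - s) = 1 - σ (s - 1) := by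
        have := sigma_sym hS1 (s - 1); rw [show -(s-1) = 1 - s by ring] at this; linarith
      have e2 : σ (1 - t) = 1 - σ (t - 1) := by
        have := sigma_sym hS1 (t - 1); rw [show -(t-1) = 1 - t by ring] at this; linarith
      rw [e1, e2] at this; linarith
  intro s t hs hst
  rcases le_or_gt t 1 with h | h
  · exact main s t hs hst (Or.inr h)
  rcases le_or_gt 1 s with h' | h'
  · exact main s t hs hst (Or.inl h')
  · have g1 := main s 1 hs (le_of_lt h') (Or.inr le_rfl)
    have g2 := main 1 t (by norm_num) (le_of_lt h) (Or.inl le_rfl)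
    norm_num at g1 g2
    linarith


lemma phiK_abs (hS1 : ∀ x : ℝ, σ (-x) - 1 / 2 = -(σ x - 1 / 2)) (x : ℝ) :
    phiK σ x = phiK σ |x| := by
  rcases abs_cases x with ⟨h, _⟩ | ⟨h, _⟩
  · rw [h]
  · rw [h, phiK_even hS1]

lemma phiK_ge_of_abs_le (hS1 : ∀ x : ℝ, σ (-x) - 1 / 2 = -(σ x - 1 / 2))
    (hc : ConcaveOn ℝ (Set.Ici (0:ℝ)) σ) {t c : ℝ} (hct : |t| ≤ c) :
    phiK σ c ≤ phiK σ t := by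
  rw [phiK_abs hS1 t]
  exact phiK_anti hS1 hc (abs_nonneg t) hct

lemma phiK_le_of_le_abs (hS1 : ∀ x : ℝ, σ (-x) - 1 / 2 = -(σ x - 1 / 2))
    (hc : ConcaveOn ℝ (Set.Ici (0:ℝ)) σ) {t c : ℝ} (hc0 : 0 ≤ c) (hct : c ≤ |t|) :
    phiK σ t ≤ phiK σ c := by
  rw [phiK_abs hS1 t]
  exact phiK_anti hS1 hc hc0 hct

lemma phiK_decay (hS1 : ∀ x : ℝ, σ (-x) - 1 / 2 = -(σ x - 1 / 2))
    (hmono : Monotone σ) (hsig2 : Tendsto σ atTop (nhds 1))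
    {α M L : ℝ} (hL : 0 < L)
    (hS3 : ∀ x : ℝ, x ≤ -L → σ x ≤ M * |x| ^ (-(1 + α)))
    {x : ℝ} (hx : L + 1 ≤ x) :
    phiK σ x ≤ M / 2 * (x - 1) ^ (-(1 + α)) := by
  have h1 : σ (x + 1) ≤ 1 := sigma_le_one hmono hsig2 _
  have h2 : σ (x - 1) = 1 - σ (1 - x) := by
    have := sigma_sym hS1 (x - 1); rw [show -(x-1) = 1 - x by ring] at this; linarith
  have h3 : σ (1 - x) ≤ M * |1 - x| ^ (-(1 + α)) := hS3 _ (by linarith)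
  have h4 : |1 - x| = x - 1 := by rw [abs_sub_comm]; exact abs_of_nonneg (by linarith)
  rw [h4] at h3
  simp only [phiK]
  rw [h2]; linarith


lemma holder_continuousOn {f : ℝ → ℝ} {a b K β : ℝ} (hβ : 0 < β)
    (hH : ∀ x ∈ Set.Icc a b, ∀ y ∈ Set.Icc a b, |f x - f y| ≤ K * |x - y| ^ β) :
    ContinuousOn f (Set.Icc a b) := by
  intro x₀ hx₀
  have habs : Tendsto (fun x : ℝ => |x - x₀|) (nhds x₀) (nhds 0) := by
    have : Continuous fun x : ℝ => |x - x₀| := (continuous_id.sub continuous_const).abs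
    simpa using this.tendsto x₀
  have hrpow : Tendsto (fun x : ℝ => K * |x - x₀| ^ β) (nhds x₀) (nhds 0) := by
    have hc : ContinuousAt (fun t : ℝ => t ^ β) 0 :=
      Real.continuousAt_rpow_const 0 β (Or.inr hβ.le)
    have := (hc.tendsto.comp habs).const_mul K
    simpa [Real.zero_rpow hβ.ne'] using this
  have hrpow' : Tendsto (fun x : ℝ => K * |x - x₀| ^ β) (nhdsWithin x₀ (Set.Icc a b))
      (nhds 0) := hrpow.mono_left nhdsWithin_le_nhds
  have hsq : Tendsto (fun x => f x - f x₀) (nhdsWithin x₀ (Set.Icc a b)) (nhds 0) := by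
    apply squeeze_zero_norm' _ hrpow'
    filter_upwards [self_mem_nhdsWithin] with x hx
    simpa using hH x hx x₀ hx₀
  have := hsq.add_const (f x₀)
  have h2 : Tendsto f (nhdsWithin x₀ (Set.Icc a b)) (nhds (f x₀)) := by simpa using this
  exact h2

lemma int_est {f : ℝ → ℝ} {a b K β : ℝ} (hβ : 0 < β)
    (hH : ∀ x ∈ Set.Icc a b, ∀ y ∈ Set.Icc a b, |f x - f y| ≤ K * |x - y| ^ β)
    (hK : 0 ≤ K) {p q x : ℝ} (hap : a ≤ p) (hpq : p < q) (hqb : q ≤ b)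
    (hx : x ∈ Set.Icc a b) :
    |(∫ u in p..q, f u) - (q - p) * f x| ≤ K * (|x - p| + (q - p)) ^ β * (q - p) := by
  have hsub : Set.uIcc p q ⊆ Set.Icc a b := by
    rw [Set.uIcc_of_le hpq.le]; exact Set.Icc_subset_Icc hap hqb
  have hint : IntervalIntegrable f volume p q :=
    ((holder_continuousOn hβ hH).mono hsub).intervalIntegrable
  have hconst : (q - p) * f x = ∫ _ in p..q, f x := by
    rw [intervalIntegral.integral_const, smul_eq_mul]
  rw [hconst, ← intervalIntegral.integral_sub hint intervalIntegrable_const]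
  have := intervalIntegral.norm_integral_le_of_norm_le_const
    (f := fun u => f u - f x) (C := K * (|x - p| + (q - p)) ^ β) (a := p) (b := q) ?_
  · rw [abs_of_nonneg (by linarith : (0:ℝ) ≤ q - p)] at this
    simpa using this
  · intro u hu
    rw [Set.uIoc_of_le hpq.le] at hu
    have hu' : u ∈ Set.Icc a b := ⟨by linarith [hu.1], le_trans hu.2 hqb⟩
    have h1 : |f u - f x| ≤ K * |u - x| ^ β := hH u hu' x hx
    have h2 : |u - x| ≤ |x - p| + (q - p) := by
      have : |u - x| ≤ |u - p| + |p - x| := abs_sub_le u p x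
      have h3 : |u - p| ≤ q - p := by
        rw [abs_of_nonneg (by linarith [hu.1] : (0:ℝ) ≤ u - p)]; linarith [hu.2]
      rw [abs_sub_comm p x] at this
      linarith
    have h4 : |u - x| ^ β ≤ (|x - p| + (q - p)) ^ β :=
      Real.rpow_le_rpow (abs_nonneg _) h2 hβ.le
    calc ‖f u - f x‖ = |f u - f x| := rfl
      _ ≤ K * |u - x| ^ β := h1
      _ ≤ K * (|x - p| + (q - p)) ^ β := by
          exact mul_le_mul_of_nonneg_left h4 hK

end Aux

set_option maxHeartbeats 2000000 in
theorem stmt18 (σ : ℝ → ℝ) (α : ℝ) (a b : ℝ) (hab : a < b) (β : ℝ)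
    (hβ : β ∈ Set.Ioc (0 : ℝ) 1) (f : ℝ → ℝ)
    (hsig1 : Filter.Tendsto σ Filter.atBot (nhds 0))
    (hsig2 : Filter.Tendsto σ Filter.atTop (nhds 1))
    (hmono : Monotone σ) (h31 : σ 1 < σ 3)
    (hS1 : ∀ x : ℝ, σ (-x) - 1 / 2 = -(σ x - 1 / 2))
    (hS2 : ContDiff ℝ 2 σ ∧ ConcaveOn ℝ (Set.Ici (0 : ℝ)) σ)
    (hα : 0 < α)
    (hS3 : ∃ M > (0 : ℝ), ∃ L > (0 : ℝ), ∀ x : ℝ, x ≤ -L → σ x ≤ M * |x| ^ (-(1 + α)))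
    (hf01 : ∀ x ∈ Set.Icc a b, f x ∈ Set.Icc (0 : ℝ) 1)
    (K : ℝ) (hK : 0 < K)
    (hHolder : ∀ x ∈ Set.Icc a b, ∀ y ∈ Set.Icc a b, |f x - f y| ≤ K * |x - y| ^ β) :
    ∃ C > (0 : ℝ), ∃ N : ℕ, ∀ n : ℕ, N ≤ n → ∀ x ∈ Set.Icc a b,
      |Kmm σ a b n f x - f x| ≤ C * (n : ℝ) ^ (-((1 + α) * β / (1 + α + β))) := by
  obtain ⟨hβ0, hβ1⟩ := hβ
  obtain ⟨M, hM, L, hL, hS3'⟩ := hS3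
  obtain ⟨-, hconc⟩ := hS2
  set P : ℝ := phiK σ 2 with hPdef
  have hP : 0 < P := by
    have : P = (σ 3 - σ 1) / 2 := by norm_num [hPdef, phiK]
    rw [this]; linarith
  set T : ℝ := max (L + 1) ((M / (2 * P)) ^ ((1:ℝ) / (1 + α)) + 2) with hTdef
  have hα1 : (0:ℝ) < 1 + α := by linarith
  have hTL : L + 1 ≤ T := le_max_left _ _
  have hTpos : 0 < T := by linarith
  have hTP : ∀ t : ℝ, T ≤ t → phiK σ t < P := by
    intro t ht
    set R : ℝ := (M / (2 * P)) ^ ((1:ℝ) / (1 + α)) with hRdef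
    have hR0 : 0 ≤ R := Real.rpow_nonneg (by positivity) _
    have hRt : R + 2 ≤ t := le_trans (le_max_right _ _) ht
    have hdecay := phiK_decay hS1 hmono hsig2 hL hS3' (le_trans hTL ht)
    have hRpow : R ^ (1 + α) = M / (2 * P) := by
      rw [hRdef, ← Real.rpow_mul (by positivity), one_div,
        inv_mul_cancel₀ hα1.ne', Real.rpow_one]
    have hlt : M / (2 * P) < (t - 1) ^ (1 + α) := by
      rw [← hRpow]
      exact Real.rpow_lt_rpow hR0 (by linarith) hα1
    have hu : 0 < (t - 1) ^ (1 + α) := Real.rpow_pos_of_pos (by linarith) _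
    have hneg : (t - 1) ^ (-(1 + α)) = ((t - 1) ^ (1 + α))⁻¹ :=
      Real.rpow_neg (by linarith) _
    have : M / 2 * (t - 1) ^ (-(1 + α)) < P := by
      rw [hneg, ← div_eq_mul_inv, div_lt_iff₀ hu]
      have := (div_lt_iff₀ (by positivity : (0:ℝ) < 2 * P)).mp hlt
      nlinarith
    linarith
  -- exponents
  have hs : (0:ℝ) < 1 + α + β := by linarith
  set e : ℝ := (1 + α) / (1 + α + β) with hedef
  set γ : ℝ := (1 + α) * β / (1 + α + β) with hγdef
  have he0 : 0 < e := by positivity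
  have he1 : e ≤ 1 := by rw [hedef, div_le_one hs]; linarith
  have hγ0 : 0 < γ := by positivity
  have hγβ : γ ≤ β := by
    rw [hγdef, div_le_iff₀ hs]; nlinarith
  set Q : ℝ := max (L + 1) 2 with hQdef
  have hQpos : (0:ℝ) < Q := lt_of_lt_of_le (by norm_num) (le_max_right _ _)
  set N : ℕ := ⌈max (3 / (b - a)) (Q ^ ((1 + α + β) / β))⌉₊ + 1 with hNdef
  set C : ℝ := K * 2 ^ β + M / (2 * P) * 2 ^ (1 + α) + K * (T + 1) ^ β with hCdef
  have hC : 0 < C := by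
    rw [hCdef]
    have h1 : (0:ℝ) < K * 2 ^ β := by positivity
    have h2 : (0:ℝ) ≤ M / (2 * P) * 2 ^ (1 + α) := by positivity
    have h3 : (0:ℝ) ≤ K * (T + 1) ^ β := by positivity
    linarith
  refine ⟨C, hC, N, ?_⟩
  intro n hn x hx
  have hmN : (N : ℝ) ≤ (n : ℝ) := Nat.cast_le.mpr hn
  set m : ℝ := (n : ℝ) with hmdef
  have hmax_le : max (3 / (b - a)) (Q ^ ((1 + α + β) / β)) ≤ m := by
    calc max (3 / (b - a)) (Q ^ ((1 + α + β) / β))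
        ≤ (⌈max (3 / (b - a)) (Q ^ ((1 + α + β) / β))⌉₊ : ℝ) := Nat.le_ceil _
      _ ≤ (N : ℝ) := by rw [hNdef]; push_cast; linarith
      _ ≤ m := hmN
  have hm1 : (1:ℝ) ≤ m := by
    have : (1:ℕ) ≤ N := by rw [hNdef]; omega
    calc (1:ℝ) ≤ (N:ℝ) := by exact_mod_cast this
      _ ≤ m := hmN
  have hm0 : (0:ℝ) < m := by linarith
  have hab3 : m * a + 3 ≤ m * b := by
    have h1 : 3 / (b - a) ≤ m := le_trans (le_max_left _ _) hmax_le
    rw [div_le_iff₀ (by linarith : (0:ℝ) < b - a)] at h1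
    have h2 : m * (b - a) = m * b - m * a := by ring
    linarith
  set δ : ℝ := m ^ (-e) with hδdef
  have hδpos : 0 < δ := Real.rpow_pos_of_pos hm0 _
  have hδinv : 1 / m ≤ δ := by
    calc 1 / m = m ^ (-1:ℝ) := by rw [Real.rpow_neg_one, one_div]
      _ ≤ m ^ (-e) := Real.rpow_le_rpow_of_exponent_le hm1 (by linarith)
  have hmδ_eq : m * δ = m ^ (1 - e) := by
    rw [hδdef, show (1:ℝ) - e = 1 + (-e) by ring, Real.rpow_add hm0, Real.rpow_one]
  have hQmδ : Q ≤ m * δ := by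
    rw [hmδ_eq]
    have h1me : 1 - e = β / (1 + α + β) := by
      rw [hedef]; field_simp; ring
    have hQm : Q ^ ((1 + α + β) / β) ≤ m := le_trans (le_max_right _ _) hmax_le
    calc Q = (Q ^ ((1 + α + β) / β)) ^ (β / (1 + α + β)) := by
          rw [← Real.rpow_mul hQpos.le,
            show (1 + α + β) / β * (β / (1 + α + β)) = 1 by field_simp,
            Real.rpow_one]
      _ ≤ m ^ (β / (1 + α + β)) :=
          Real.rpow_le_rpow (Real.rpow_nonneg hQpos.le _) hQm (by positivity)
      _ = m ^ (1 - e) := by rw [h1me]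
  have hmδL : L + 1 ≤ m * δ := le_trans (le_max_left _ _) hQmδ
  have hmδ2 : (2:ℝ) ≤ m * δ := le_trans (le_max_right _ _) hQmδ
  have hmδpos : 0 < m * δ := by linarith
  obtain ⟨hax, hxb⟩ := hx
  obtain ⟨hfx0, hfx1⟩ := hf01 x ⟨hax, hxb⟩
  -- index range facts
  have hLbUb : (⌈m * a⌉ : ℤ) ≤ ⌊m * b⌋ - 1 := by
    have h1 : (⌈m * a⌉ : ℝ) < m * a + 1 := Int.ceil_lt_add_one _
    have h2 : m * b - 1 < (⌊m * b⌋ : ℝ) := Int.sub_one_lt_floor _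
    have : (⌈m * a⌉ : ℝ) < ((⌊m * b⌋ - 1 : ℤ) : ℝ) := by push_cast; linarith
    exact_mod_cast this.le
  have hk_lo : ∀ k : ℤ, ⌈m * a⌉ ≤ k → a ≤ (k : ℝ) / m := by
    intro k hk
    rw [le_div_iff₀ hm0]
    calc a * m = m * a := by ring
      _ ≤ (⌈m * a⌉ : ℝ) := Int.le_ceil _
      _ ≤ (k : ℝ) := by exact_mod_cast hk
  have hk_hi : ∀ k : ℤ, k ≤ ⌊m * b⌋ - 1 → ((k : ℝ) + 1) / m ≤ b := by
    intro k hk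
    rw [div_le_iff₀ hm0]
    have h1 : (k : ℝ) + 1 ≤ (⌊m * b⌋ : ℝ) := by
      have : (k : ℝ) ≤ ((⌊m * b⌋ - 1 : ℤ) : ℝ) := by exact_mod_cast hk
      push_cast at this; linarith
    calc (k : ℝ) + 1 ≤ (⌊m * b⌋ : ℝ) := h1
      _ ≤ m * b := Int.floor_le _
      _ = b * m := by ring
  -- estimate on Kantorovich means
  have hA : ∀ k : ℤ, ⌈m * a⌉ ≤ k → k ≤ ⌊m * b⌋ - 1 →
      |m * (∫ u in ((k : ℝ) / m)..(((k : ℝ) + 1) / m), f u) - f x| ≤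
        K * (|x - (k : ℝ) / m| + 1 / m) ^ β := by
    intro k h1 h2
    set I := ∫ u in ((k : ℝ) / m)..(((k : ℝ) + 1) / m), f u with hI
    have hqp : ((k : ℝ) + 1) / m - (k : ℝ) / m = 1 / m := by field_simp; ring
    have hest := int_est hβ0 hHolder hK.le (hk_lo k h1)
      (by linarith [hqp, one_div_pos.mpr hm0] : (k:ℝ)/m < ((k:ℝ)+1)/m)
      (hk_hi k h2) ⟨hax, hxb⟩
    rw [hqp, ← hI] at hest
    have habs : |m * I - f x| = m * |I - 1 / m * f x| := by
      rw [show m * I - f x = m * (I - 1 / m * f x) by field_simp, abs_mul,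
        abs_of_pos hm0]
    rw [habs]
    calc m * |I - 1 / m * f x| ≤ m * (K * (|x - (k:ℝ)/m| + 1/m) ^ β * (1/m)) :=
          mul_le_mul_of_nonneg_left hest hm0.le
      _ = K * (|x - (k:ℝ)/m| + 1/m) ^ β := by field_simp
  -- unfold the operator
  simp only [Kmm]
  rw [← hmdef]
  set SD : Set ℝ := {z : ℝ | ∃ d : ℤ, ⌈m * a⌉ ≤ d ∧ d ≤ ⌊m * b⌋ - 1 ∧
    z = phiK σ (m * x - (d : ℝ))} with hSDdef
  set D : ℝ := sSup SD with hDdef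
  set SO : Set ℝ := {y : ℝ | ∃ k : ℤ, ⌈m * a⌉ ≤ k ∧ k ≤ ⌊m * b⌋ - 1 ∧
    y = min (m * ∫ u in ((k : ℝ) / m)..(((k : ℝ) + 1) / m), f u)
      (phiK σ (m * x - (k : ℝ)) / D)} with hSOdef
  have hSDfin : SD.Finite := by
    apply Set.Finite.subset ((Set.finite_Icc (⌈m*a⌉) (⌊m*b⌋-1)).image
      (fun d : ℤ => phiK σ (m * x - (d : ℝ))))
    rintro z ⟨d, h1, h2, rfl⟩
    exact ⟨d, ⟨h1, h2⟩, rfl⟩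
  have hSOfin : SO.Finite := by
    apply Set.Finite.subset ((Set.finite_Icc (⌈m*a⌉) (⌊m*b⌋-1)).image
      (fun k : ℤ => min (m * ∫ u in ((k : ℝ) / m)..(((k : ℝ) + 1) / m), f u)
        (phiK σ (m * x - (k : ℝ)) / D)))
    rintro y ⟨k, h1, h2, rfl⟩
    exact ⟨k, ⟨h1, h2⟩, rfl⟩
  -- a nearby index
  set k₁ : ℤ := max ⌈m * a⌉ (min ⌊m * x⌋ (⌊m * b⌋ - 1)) with hk₁def
  have hk₁1 : ⌈m * a⌉ ≤ k₁ := le_max_left _ _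
  have hk₁2 : k₁ ≤ ⌊m * b⌋ - 1 := max_le hLbUb (min_le_right _ _)
  have habs_k₁ : |m * x - (k₁ : ℝ)| ≤ 2 := by
    have hmax : (a : ℝ) * m ≤ x * m := mul_le_mul_of_nonneg_right hax hm0.le
    have hmbx : m * x ≤ m * b := mul_le_mul_of_nonneg_left hxb hm0.le
    have hup : (k₁ : ℝ) ≤ m * x + 1 := by
      have h1 : k₁ ≤ max ⌈m * a⌉ ⌊m * x⌋ :=
        max_le (le_max_left _ _) (le_trans (min_le_left _ _) (le_max_right _ _))
      have h2 : ((max ⌈m * a⌉ ⌊m * x⌋ : ℤ) : ℝ) = max ((⌈m * a⌉ : ℤ) : ℝ) ((⌊m * x⌋ : ℤ) : ℝ) := by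
        push_cast; rfl
      have h3 : (k₁ : ℝ) ≤ max ((⌈m * a⌉ : ℤ) : ℝ) ((⌊m * x⌋ : ℤ) : ℝ) := by
        rw [← h2]; exact_mod_cast h1
      have h4 : ((⌈m * a⌉ : ℤ) : ℝ) ≤ m * x + 1 := by
        have h4a := Int.ceil_lt_add_one (m * a)
        have h4b : m * a ≤ m * x := mul_le_mul_of_nonneg_left hax hm0.le
        linarith
      have h5 : ((⌊m * x⌋ : ℤ) : ℝ) ≤ m * x + 1 := by
        have := Int.floor_le (m * x); linarith
      exact le_trans h3 (max_le h4 h5)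
    have hdown : m * x - 2 ≤ (k₁ : ℝ) := by
      have h1 : min ⌊m * x⌋ (⌊m * b⌋ - 1) ≤ k₁ := le_max_right _ _
      have h3 : min ((⌊m * x⌋ : ℤ) : ℝ) (((⌊m * b⌋ - 1 : ℤ)) : ℝ) ≤ (k₁ : ℝ) := by
        have h2 : ((min ⌊m * x⌋ (⌊m * b⌋ - 1) : ℤ) : ℝ) =
            min ((⌊m * x⌋ : ℤ) : ℝ) (((⌊m * b⌋ - 1 : ℤ)) : ℝ) := by push_cast; rfl
        rw [← h2]; exact_mod_cast h1
      have h4 : m * x - 2 ≤ ((⌊m * x⌋ : ℤ) : ℝ) := by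
        have := Int.sub_one_lt_floor (m * x); linarith
      have h5 : m * x - 2 ≤ (((⌊m * b⌋ - 1 : ℤ)) : ℝ) := by
        have := Int.sub_one_lt_floor (m * b); push_cast; linarith
      exact le_trans (le_min h4 h5) h3
    rw [abs_le]; constructor <;> linarith
  have hSDne : SD.Nonempty := ⟨phiK σ (m * x - (k₁ : ℝ)), k₁, hk₁1, hk₁2, rfl⟩
  have hSOne : SO.Nonempty :=
    ⟨min (m * ∫ u in ((k₁ : ℝ) / m)..(((k₁ : ℝ) + 1) / m), f u)
      (phiK σ (m * x - (k₁ : ℝ)) / D), k₁, hk₁1, hk₁2, rfl⟩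
  have hDP : P ≤ D := by
    have h1 : phiK σ 2 ≤ phiK σ (m * x - (k₁ : ℝ)) :=
      phiK_ge_of_abs_le hS1 hconc habs_k₁
    exact le_trans h1 (le_csSup hSDfin.bddAbove ⟨k₁, hk₁1, hk₁2, rfl⟩)
  have hD0 : 0 < D := lt_of_lt_of_le hP hDP
  obtain ⟨d0, hd01, hd02, hd0eq⟩ := hSDne.csSup_mem hSDfin
  -- shorthand error quantities
  set E₁ : ℝ := K * (2 * δ) ^ β with hE₁def
  set E₂ : ℝ := M / (2 * P) * 2 ^ (1 + α) * (m * δ) ^ (-(1 + α)) with hE₂def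
  set E₃ : ℝ := K * ((T + 1) / m) ^ β with hE₃def
  have hE₁0 : 0 ≤ E₁ := by positivity
  have hE₂0 : 0 ≤ E₂ := by positivity
  have hE₃0 : 0 ≤ E₃ := by positivity
  -- upper bound
  have hup : sSup SO ≤ f x + (E₁ + E₂) := by
    apply csSup_le hSOne
    rintro y ⟨k, h1, h2, rfl⟩
    rcases le_or_gt |x - (k : ℝ) / m| δ with hc | hc
    · apply le_trans (min_le_left _ _)
      have h3 := hA k h1 h2
      have h4 : (|x - (k:ℝ)/m| + 1/m) ^ β ≤ (2 * δ) ^ β :=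
        Real.rpow_le_rpow (by positivity) (by linarith) hβ0.le
      have h5 := (abs_le.mp h3).2
      have h6 : K * (|x - (k:ℝ)/m| + 1/m) ^ β ≤ E₁ :=
        mul_le_mul_of_nonneg_left h4 hK.le
      linarith
    · apply le_trans (min_le_right _ _)
      have hk_abs : m * δ ≤ |m * x - (k : ℝ)| := by
        have heq : m * x - (k:ℝ) = m * (x - (k:ℝ)/m) := by field_simp
        rw [heq, abs_mul, abs_of_pos hm0]
        exact mul_le_mul_of_nonneg_left hc.le hm0.le
      have h5 : phiK σ (m * x - (k : ℝ)) ≤ phiK σ (m * δ) :=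
        phiK_le_of_le_abs hS1 hconc hmδpos.le hk_abs
      have h6 : phiK σ (m * δ) ≤ M / 2 * (m * δ - 1) ^ (-(1 + α)) :=
        phiK_decay hS1 hmono hsig2 hL hS3' hmδL
      have h7 : (m * δ - 1) ^ (-(1 + α)) ≤ (m * δ / 2) ^ (-(1 + α)) :=
        Real.rpow_le_rpow_of_nonpos (by linarith) (by linarith) (by linarith)
      have h2p : (0:ℝ) < 2 ^ (1 + α) := Real.rpow_pos_of_pos two_pos _
      have hmp : (0:ℝ) < (m * δ) ^ (1 + α) := Real.rpow_pos_of_pos hmδpos _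
      have h8 : (m * δ / 2) ^ (-(1 + α)) = 2 ^ (1 + α) * (m * δ) ^ (-(1 + α)) := by
        rw [Real.div_rpow hmδpos.le (by norm_num : (0:ℝ) ≤ 2),
          Real.rpow_neg hmδpos.le, Real.rpow_neg (by norm_num : (0:ℝ) ≤ 2)]
        field_simp
      have h9 : phiK σ (m * x - (k : ℝ)) / D ≤ M / 2 * ((m * δ / 2) ^ (-(1 + α))) / P := by
        apply div_le_div₀ (by positivity) ?_ hP hDP
        calc phiK σ (m * x - (k : ℝ)) ≤ M / 2 * (m * δ - 1) ^ (-(1 + α)) :=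
              le_trans h5 h6
          _ ≤ M / 2 * (m * δ / 2) ^ (-(1 + α)) :=
              mul_le_mul_of_nonneg_left h7 (by positivity)
      have h10 : M / 2 * ((m * δ / 2) ^ (-(1 + α))) / P = E₂ := by
        rw [h8, hE₂def]; field_simp [hP.ne']
      rw [h10] at h9
      linarith
  -- lower bound
  have hlow : f x - E₃ ≤ sSup SO := by
    have hd0T : |m * x - (d0 : ℝ)| ≤ T := by
      by_contra hcon
      push_neg at hcon
      have h1 := hTP |m * x - (d0 : ℝ)| hcon.le
      rw [← phiK_abs hS1] at h1
      rw [← hd0eq] at h1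
      linarith
    have hx_d0 : |x - (d0 : ℝ) / m| ≤ T / m := by
      have heq : x - (d0:ℝ)/m = (m * x - (d0:ℝ)) / m := by field_simp
      rw [heq, abs_div, abs_of_pos hm0]
      gcongr
    have hAd0 := hA d0 hd01 hd02
    have hBd : K * (|x - (d0:ℝ)/m| + 1/m) ^ β ≤ E₃ := by
      apply mul_le_mul_of_nonneg_left ?_ hK.le
      apply Real.rpow_le_rpow (by positivity) ?_ hβ0.le
      have heq2 : (T + 1) / m = T/m + 1/m := by ring
      linarith
    have hAl : f x - E₃ ≤ m * ∫ u in ((d0 : ℝ) / m)..(((d0 : ℝ) + 1) / m), f u := by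
      have := (abs_le.mp hAd0).1
      linarith
    have hratio : phiK σ (m * x - (d0 : ℝ)) / D = 1 := by
      rw [← hd0eq]; exact div_self hD0.ne'
    have hmem : min (m * ∫ u in ((d0 : ℝ) / m)..(((d0 : ℝ) + 1) / m), f u)
        (phiK σ (m * x - (d0 : ℝ)) / D) ∈ SO := ⟨d0, hd01, hd02, rfl⟩
    refine le_trans ?_ (le_csSup hSOfin.bddAbove hmem)
    apply le_min hAl
    rw [hratio]; linarith
  -- final computation
  have hE₁eq : E₁ = K * 2 ^ β * m ^ (-γ) := by
    rw [hE₁def, Real.mul_rpow (by norm_num : (0:ℝ) ≤ 2) hδpos.le, hδdef,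
      ← Real.rpow_mul hm0.le, show -e * β = -γ by rw [hedef, hγdef]; ring]
    ring
  have hE₂eq : E₂ = M / (2 * P) * 2 ^ (1 + α) * m ^ (-γ) := by
    rw [hE₂def, hmδ_eq, ← Real.rpow_mul hm0.le]
    congr 2
    rw [hedef, hγdef]
    field_simp
    ring
  have hE₃le : E₃ ≤ K * (T + 1) ^ β * m ^ (-γ) := by
    rw [hE₃def, Real.div_rpow (by linarith : (0:ℝ) ≤ T + 1) hm0.le,
      div_eq_mul_inv, ← Real.rpow_neg hm0.le]
    rw [← mul_assoc]
    apply mul_le_mul_of_nonneg_left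
      (Real.rpow_le_rpow_of_exponent_le hm1 (by linarith)) (by positivity)
  have hsum : E₁ + E₂ + E₃ ≤ C * m ^ (-γ) := by
    rw [hE₁eq, hE₂eq]
    have hCm : C * m ^ (-γ) = K * 2 ^ β * m ^ (-γ) + M / (2 * P) * 2 ^ (1 + α) * m ^ (-γ)
        + K * (T + 1) ^ β * m ^ (-γ) := by rw [hCdef]; ring
    linarith
  rw [abs_le]
  constructor
  · linarith
  · linarith
end
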